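/- For a random closed/measurable set Γ in a finite measure space (X, λ), the Vorob'ev median Q_{0.5} = {x : P(x ∈ Γ) ≥ 0.5} minimizes the expected measure of the symmetric difference: for every measurable set M ⊆ X, E[λ(Γ Δ Q_{0.5})] ≤ E[λ(Γ Δ M)]. -/
import Mathlib


open MeasureTheory ProbabilityTheory symmDiff
open scoped ENNReal

/-- The Vorob'ev median `Q_{0.5} = {x | P(x ∈ Γ) ≥ 1/2}` minimizes the expected measure
of the symmetric difference with the random set `Γ`, over all measurable sets `M`. -/
theorem vorobev_median_minimizes
    {Ω X : Type*} [MeasurableSpace Ω] [MeasurableSpace X]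
    (μ : Measure Ω) [IsProbabilityMeasure μ]
    (ν : Measure X) [IsFiniteMeasure ν]
    (Γ : Ω → Set X)
    (hΓ : MeasurableSet {p : Ω × X | p.2 ∈ Γ p.1})
    (Q : Set X) (hQ : Q = {x : X | (1:ℝ≥0∞)/2 ≤ μ {ω | x ∈ Γ ω}})
    (M : Set X) (hM : MeasurableSet M) :
    ∫⁻ ω, ν (Γ ω ∆ Q) ∂μ ≤ ∫⁻ ω, ν (Γ ω ∆ M) ∂μ := by
  classical
  have hsec : ∀ x : X, MeasurableSet {ω | x ∈ Γ ω} := fun x =>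
    measurable_prodMk_right hΓ
  have hQmeas : MeasurableSet Q := by
    rw [hQ]
    exact measurableSet_le measurable_const (measurable_measure_prodMk_right hΓ)
  have key : ∀ (S : Set X), MeasurableSet S →
      ∫⁻ ω, ν (Γ ω ∆ S) ∂μ = ∫⁻ x, μ {ω | x ∈ Γ ω ∆ S} ∂ν := by
    intro S hS
    have hAS : MeasurableSet {p : Ω × X | p.2 ∈ Γ p.1 ∆ S} := by
      have h : {p : Ω × X | p.2 ∈ Γ p.1 ∆ S}
          = {p : Ω × X | p.2 ∈ Γ p.1} ∆ {p : Ω × X | p.2 ∈ S} := by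
        ext p; simp [Set.mem_symmDiff]
      rw [h]
      exact hΓ.symmDiff (measurable_snd hS)
    calc ∫⁻ ω, ν (Γ ω ∆ S) ∂μ
        = ∫⁻ ω, ν (Prod.mk ω ⁻¹' {p : Ω × X | p.2 ∈ Γ p.1 ∆ S}) ∂μ := by
          refine lintegral_congr fun ω => ?_
          congr 1
      _ = (μ.prod ν) {p : Ω × X | p.2 ∈ Γ p.1 ∆ S} := (Measure.prod_apply hAS).symm
      _ = ∫⁻ x, μ ((fun ω => (ω, x)) ⁻¹' {p : Ω × X | p.2 ∈ Γ p.1 ∆ S}) ∂ν :=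
          Measure.prod_apply_symm hAS
      _ = ∫⁻ x, μ {ω | x ∈ Γ ω ∆ S} ∂ν := by
          refine lintegral_congr fun x => ?_
          congr 1
  rw [key Q hQmeas, key M hM]
  refine lintegral_mono fun x => ?_
  have hset : ∀ (S : Set X), {ω | x ∈ Γ ω ∆ S}
      = if x ∈ S then {ω | x ∈ Γ ω}ᶜ else {ω | x ∈ Γ ω} := by
    intro S
    by_cases hxS : x ∈ S
    · rw [if_pos hxS]; ext ω; simp [Set.mem_symmDiff, hxS]
    · rw [if_neg hxS]; ext ω; simp [Set.mem_symmDiff, hxS]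
  rw [hset Q, hset M]
  set p := μ {ω | x ∈ Γ ω} with hp
  have hcompl : μ ({ω | x ∈ Γ ω}ᶜ) = 1 - p := prob_compl_eq_one_sub (hsec x)
  by_cases hxQ : x ∈ Q <;> by_cases hxM : x ∈ M
  · rw [if_pos hxQ, if_pos hxM]
  · rw [if_pos hxQ, if_neg hxM, hcompl]
    have hge : (1:ℝ≥0∞)/2 ≤ p := by rw [hQ] at hxQ; exact hxQ
    rw [tsub_le_iff_right]
    calc (1:ℝ≥0∞) = 1/2 + 1/2 := (ENNReal.add_halves 1).symm
      _ ≤ p + p := add_le_add hge hge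
  · rw [if_neg hxQ, if_pos hxM, hcompl]
    have hle : p ≤ (1:ℝ≥0∞)/2 := by
      rw [hQ] at hxQ
      exact le_of_not_ge hxQ
    calc p ≤ 1/2 := hle
      _ = 1 - 1/2 := (ENNReal.sub_half ENNReal.one_ne_top).symm
      _ ≤ 1 - p := tsub_le_tsub_left hle 1
  · rw [if_neg hxQ, if_neg hxM]
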